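/- For the 1-qubit phase damping channel N_PD with parameter 0 ≤ r ≤ 1 and Kraus operators N₀ = diag(1, √(1−r)), N₁ = diag(0, √r), the worst-case fidelity utility min over pure states ψ of ⟨ψ|N_PD(ψ)|ψ⟩ equals (1 + √(1−r))/2. -/

import Mathlib

open Matrix Kronecker ComplexOrder

noncomputable def lamMax {n : Type*} [Fintype n] (A : Matrix n n ℂ) : ℝ :=
  ⨆ v : {v : n → ℂ // star v ⬝ᵥ v = 1}, (star v.1 ⬝ᵥ A.mulVec v.1).re

noncomputable def lamMin {n : Type*} [Fintype n] (A : Matrix n n ℂ) : ℝ :=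
  ⨅ v : {v : n → ℂ // star v ⬝ᵥ v = 1}, (star v.1 ⬝ᵥ A.mulVec v.1).re

noncomputable def pureState {n : Type*} (v : n → ℂ) : Matrix n n ℂ :=
  Matrix.vecMulVec v (star v)

noncomputable def chanApp {ι n : Type*} [Fintype ι] [Fintype n] (E : ι → Matrix n n ℂ)
    (ρ : Matrix n n ℂ) : Matrix n n ℂ := ∑ k, E k * ρ * (E k)ᴴ

noncomputable def adjApp {ι n : Type*} [Fintype ι] [Fintype n] (E : ι → Matrix n n ℂ)
    (M : Matrix n n ℂ) : Matrix n n ℂ := ∑ k, (E k)ᴴ * M * E k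

noncomputable def Matrix.PosSemidef.sqrt {n 𝕜 : Type*} [Fintype n] [DecidableEq n] [RCLike 𝕜]
    {A : Matrix n n 𝕜} (hA : A.PosSemidef) : Matrix n n 𝕜 :=
  hA.1.eigenvectorUnitary.1 * diagonal ((↑) ∘ (√·) ∘ hA.1.eigenvalues) *
    (star hA.1.eigenvectorUnitary : Matrix n n 𝕜)

noncomputable def traceDist {n : Type*} [Fintype n] [DecidableEq n] (A B : Matrix n n ℂ) : ℝ :=
  ((Matrix.posSemidef_conjTranspose_mul_self (A - B)).sqrt.trace).re / 2

noncomputable def depol {n : Type*} [Fintype n] [DecidableEq n] (D : ℕ) (p : ℝ)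
    (ρ : Matrix n n ℂ) : Matrix n n ℂ :=
  (p : ℂ) • ρ + (((1 - p) / D : ℝ) : ℂ) • 1

noncomputable def qldpOf {n : Type*} [Fintype n] (N : Matrix n n ℂ → Matrix n n ℂ) : ℝ :=
  ⨆ v : {v : n → ℂ // star v ⬝ᵥ v = 1},
    Real.log (lamMax (N (pureState v.1)) / lamMin (N (pureState v.1)))

lemma key_expr (s t : ℝ) (v : Fin 2 → ℂ) :
    (star v ⬝ᵥ (chanApp
        ![!![1, 0; 0, (s : ℂ)], !![0, 0; 0, (t : ℂ)]]
        (pureState v)).mulVec v).re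
    = (Complex.normSq (v 0))^2 + (Complex.normSq (v 1))^2 * (s^2 + t^2)
      + 2 * s * Complex.normSq (v 0) * Complex.normSq (v 1) := by
  simp [chanApp, pureState, Matrix.mulVec, dotProduct, Fin.sum_univ_two,
    Matrix.mul_apply, Matrix.vecMul, Matrix.vecMulVec_apply, Matrix.conjTranspose_apply,
    Complex.normSq]
  ring

theorem stmt12 {r : ℝ} (hr0 : 0 ≤ r) (hr1 : r ≤ 1) :
    (⨅ v : {v : Fin 2 → ℂ // star v ⬝ᵥ v = 1},
        (star v.1 ⬝ᵥ (chanApp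
            ![!![1, 0; 0, (Real.sqrt (1 - r) : ℂ)], !![0, 0; 0, (Real.sqrt r : ℂ)]]
            (pureState v.1)).mulVec v.1).re) =
      (1 + Real.sqrt (1 - r)) / 2 := by
  set s := Real.sqrt (1 - r) with hs
  have hs2 : s ^ 2 = 1 - r := Real.sq_sqrt (by linarith)
  have ht2 : (Real.sqrt r) ^ 2 = r := Real.sq_sqrt hr0
  have hs0 : 0 ≤ s := Real.sqrt_nonneg _
  have hs1 : s ≤ 1 := by nlinarith [hs2]
  have hunit : ∀ v : {v : Fin 2 → ℂ // star v ⬝ᵥ v = 1},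
      Complex.normSq (v.1 0) + Complex.normSq (v.1 1) = 1 := by
    rintro ⟨v, hv⟩
    have := congrArg Complex.re hv
    simpa [dotProduct, Fin.sum_univ_two, Complex.normSq, mul_comm] using this
  have hval : ∀ v : {v : Fin 2 → ℂ // star v ⬝ᵥ v = 1},
      (star v.1 ⬝ᵥ (chanApp
          ![!![1, 0; 0, (s : ℂ)], !![0, 0; 0, (Real.sqrt r : ℂ)]]
          (pureState v.1)).mulVec v.1).re
      = (Complex.normSq (v.1 0))^2 + (Complex.normSq (v.1 1))^2
        + 2 * s * Complex.normSq (v.1 0) * Complex.normSq (v.1 1) := by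
    intro v
    rw [key_expr s (Real.sqrt r) v.1, hs2, ht2]
    ring
  have hlb : ∀ v : {v : Fin 2 → ℂ // star v ⬝ᵥ v = 1},
      (1 + s) / 2 ≤ (star v.1 ⬝ᵥ (chanApp
          ![!![1, 0; 0, (s : ℂ)], !![0, 0; 0, (Real.sqrt r : ℂ)]]
          (pureState v.1)).mulVec v.1).re := by
    intro v
    rw [hval v]
    have h1 := hunit v
    have hy' : Complex.normSq (v.1 1) = 1 - Complex.normSq (v.1 0) := by linarith
    rw [hy']
    nlinarith [mul_nonneg (by linarith : (0:ℝ) ≤ 1 - s)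
      (sq_nonneg (2 * Complex.normSq (v.1 0) - 1))]
  have h2sq : Real.sqrt 2 * Real.sqrt 2 = 2 := Real.mul_self_sqrt (by norm_num)
  have hxw' : Complex.normSq ((((Real.sqrt 2 : ℝ) : ℂ))⁻¹) = 1/2 := by
    rw [map_inv₀, Complex.normSq_ofReal, h2sq]; norm_num
  have hw : star ![(((Real.sqrt 2 : ℝ) : ℂ))⁻¹, (((Real.sqrt 2 : ℝ) : ℂ))⁻¹] ⬝ᵥ
      ![(((Real.sqrt 2 : ℝ) : ℂ))⁻¹, (((Real.sqrt 2 : ℝ) : ℂ))⁻¹] = 1 := by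
    have : ∀ z : ℂ, (starRingEnd ℂ) z * z = (Complex.normSq z : ℂ) := fun z => by
      rw [Complex.normSq_eq_conj_mul_self]
    simp only [dotProduct, Fin.sum_univ_two, Pi.star_apply,
      Matrix.cons_val_zero, Matrix.cons_val_one, Matrix.head_cons, RCLike.star_def, this, hxw']
    norm_num
  apply le_antisymm
  · refine ciInf_le_of_le ⟨(1+s)/2, ?_⟩ ⟨_, hw⟩ ?_
    · rintro x ⟨v, rfl⟩; exact hlb v
    · rw [hval ⟨_, hw⟩]
      simp only [Matrix.cons_val_zero, Matrix.cons_val_one, Matrix.head_cons, hxw']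
      linarith
  · haveI : Nonempty {v : Fin 2 → ℂ // star v ⬝ᵥ v = 1} := ⟨⟨_, hw⟩⟩
    exact le_ciInf hlb
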